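/- Suppose h₀ > 0 and for every h ∈ [0, h₀] the forward-Euler map is strongly stable in norm, i.e. ‖y + h·f(y)‖ ≤ ‖y‖ for all y ∈ E. Then for every h ∈ [0, h₀] the SSPRK3 step is strongly stable: ‖Φ₃(h,f,y)‖ ≤ ‖y‖ for all y ∈ E. -/

import Mathlib

/-- One step of the SSPRK3 method with step size `h` for the ODE `y' = f(y)`:
`Φ₃(h,f,y) = (1/3)y + (2/3)y₂ + (2/3)h·f(y₂)` where `y₁ = y + h·f(y)` and
`y₂ = (3/4)y + (1/4)y₁ + (1/4)h·f(y₁)`. -/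
noncomputable def ssprk3Step {E : Type*} [AddCommGroup E] [Module ℝ E]
    (h : ℝ) (f : E → E) (y : E) : E :=
  let y₁ := y + h • f y
  let y₂ := (3 / 4 : ℝ) • y + (1 / 4 : ℝ) • y₁ + ((1 / 4 : ℝ) * h) • f y₁
  (1 / 3 : ℝ) • y + (2 / 3 : ℝ) • y₂ + ((2 / 3 : ℝ) * h) • f y₂

/-!
SSPRK3 in Shu–Osher form: every stage is a convex combination of the initial value and a
forward-Euler step applied to the previous stage. A forward-Euler step does not increase the
norm, and neither does a convex combination of vectors of norm at most `‖y‖`, so by induction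
over the stages no stage has norm larger than `‖y‖`.
-/

section

variable {E : Type*}

def eulerStep [AddCommGroup E] [Module ℝ E] (h : ℝ) (f : E → E) (y : E) : E :=
  y + h • f y

theorem ssprk3Step_eq_shuOsher [AddCommGroup E] [Module ℝ E] (h : ℝ) (f : E → E) (y : E) :
    ssprk3Step h f y = (1 / 3 : ℝ) • y + (2 / 3 : ℝ) •
      eulerStep h f ((3 / 4 : ℝ) • y + (1 / 4 : ℝ) • eulerStep h f (eulerStep h f y)) := by
  have stage : ∀ (a b : ℝ) (x : E), a • y + b • x + (b * h) • f x = a • y + b • eulerStep h f x :=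
    fun a b x => by rw [eulerStep, smul_add, smul_smul, add_assoc]
  simp only [ssprk3Step]
  rw [stage, stage]
  rfl

variable [NormedAddCommGroup E] [NormedSpace ℝ E]

theorem norm_convexCombination_le {y z : E} (hz : ‖z‖ ≤ ‖y‖) {a b : ℝ} (ha : 0 ≤ a)
    (hb : 0 ≤ b) (hab : a + b = 1) : ‖a • y + b • z‖ ≤ ‖y‖ := by
  simpa using convex_closedBall (0 : E) ‖y‖ (by simp) (by simpa using hz) ha hb hab

theorem norm_ssprk3Step_le {h : ℝ} {f : E → E} (heuler : ∀ y, ‖eulerStep h f y‖ ≤ ‖y‖)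
    (y : E) : ‖ssprk3Step h f y‖ ≤ ‖y‖ := by
  have hy₁ := heuler y
  have hy₂ : ‖(3 / 4 : ℝ) • y + (1 / 4 : ℝ) • eulerStep h f (eulerStep h f y)‖ ≤ ‖y‖ :=
    norm_convexCombination_le ((heuler _).trans hy₁) (by norm_num) (by norm_num) (by norm_num)
  rw [ssprk3Step_eq_shuOsher]
  exact norm_convexCombination_le ((heuler _).trans hy₂) (by norm_num) (by norm_num)
    (by norm_num)

end

theorem ssprk3_strongly_stable_of_euler_strongly_stable_general
    {E : Type*} [NormedAddCommGroup E] [NormedSpace ℝ E]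
    (f : E → E) (h₀ : ℝ)
    (heuler : ∀ h ∈ Set.Icc (0 : ℝ) h₀, ∀ y : E, ‖y + h • f y‖ ≤ ‖y‖) :
    ∀ h ∈ Set.Icc (0 : ℝ) h₀, ∀ y : E, ‖ssprk3Step h f y‖ ≤ ‖y‖ :=
  fun h hh => norm_ssprk3Step_le (heuler h hh)

/-- If the forward-Euler map `y ↦ y + h·f(y)` is strongly stable in norm for every
`h ∈ [0, h₀]`, then the SSPRK3 step is strongly stable for every `h ∈ [0, h₀]`. -/
theorem ssprk3_strongly_stable_of_euler_strongly_stable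
    {E : Type*} [NormedAddCommGroup E] [NormedSpace ℝ E]
    (f : E → E) (h₀ : ℝ) (hh₀ : 0 < h₀)
    (heuler : ∀ h ∈ Set.Icc (0 : ℝ) h₀, ∀ y : E, ‖y + h • f y‖ ≤ ‖y‖) :
    ∀ h ∈ Set.Icc (0 : ℝ) h₀, ∀ y : E, ‖ssprk3Step h f y‖ ≤ ‖y‖ :=
  ssprk3_strongly_stable_of_euler_strongly_stable_general f h₀ heuler
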